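/- Let (X,d) be a geodesic metric space and suppose there is a number D>0 and for every pair of points x,y ∈ X a continuous path η(x,y):[0,1]→X with η(x,y)(0)=x and η(x,y)(1)=y such that: (1) if d(x,y) ≤ 1 then the diameter of η(x,y)([0,1]) is at most D; (2) for all 0 ≤ s ≤ t ≤ 1 the Hausdorff distance between η(x,y)([s,t]) and η(η(x,y)(s), η(x,y)(t))([0,1]) is at most D; (3) for all x,y,z ∈ X, the set η(x,y)([0,1]) is contained in the D-neighborhood of η(x,z)([0,1]) ∪ η(z,y)([0,1]). Then there is a constant κ₁>0 depending only on D such that for all x,y ∈ X and every geodesic c:[0,d(x,y)]→X with c(0)=x and c(d(x,y))=y, every point of η(x,y)([0,1]) lies within distance κ₁ of the image of c. -/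

import Mathlib

/-- `c` restricted to `[a,b]` is a geodesic (an isometric embedding of the interval). -/
def IsGeodesicOn {X : Type*} [MetricSpace X] (c : ℝ → X) (a b : ℝ) : Prop :=
  ∀ s ∈ Set.Icc a b, ∀ t ∈ Set.Icc a b, dist (c s) (c t) = |s - t|

/-- A geodesic metric space: any two points are joined by a geodesic. -/
def GeodesicSpace (X : Type*) [MetricSpace X] : Prop :=
  ∀ x y : X, ∃ c : ℝ → X, c 0 = x ∧ c (dist x y) = y ∧ IsGeodesicOn c 0 (dist x y)

/-!
Bisecting a geodesic segment of length `≤ 2 ^ n` and using thinness of `η`-triangles `n` times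
shows that `η` stays within `D (n + 1)` of it: a logarithmic bound.

To make it uniform, fix a geodesic `c`, let `M` be the best bound over all its subsegments, and
let `q` on `η` be at distance `r ≤ M` from `c`, attained at `c s₀`. Cutting `c` at `s₀ ± R` with
`R = 2M + 2D + 1` puts `q` within `2D` of an `η`-path over one of three pieces. The `η`-path over
an outer piece stays within `M` of that piece, which is `R` away from `c s₀` and hence more than
`M + 2D` away from `q`. So `q` is near the `η`-path over the middle piece, of length `≤ 2R`, and
the logarithmic bound gives `r ≤ D log₂ (8M + 8D + 4) + 3D`. Hence `M = O(D log M)`, which bounds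
`M` by a function of `D`.
-/

open Set Metric

variable {X : Type*} [MetricSpace X]

lemma infDist_le_infDist_of_subset_add_dist {p q : X} {s t : Set X} (hst : s ⊆ t)
    (hs : s.Nonempty) : infDist p t ≤ infDist q s + dist p q :=
  (infDist_le_infDist_of_subset hst hs).trans infDist_le_infDist_add_dist

lemma sub_dist_le_infDist {p w₀ : X} {s : Set X} {R : ℝ} (hs : s.Nonempty)
    (hR : ∀ w ∈ s, R ≤ dist w w₀) : R - dist p w₀ ≤ infDist p s :=
  (le_infDist hs).2 fun w hw => by linarith [hR w hw, dist_triangle w p w₀, dist_comm p w]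

lemma max_eq_left_or_le_abs_sub (u s₀ R : ℝ) :
    max u (s₀ - R) = u ∨ ∀ s ≤ max u (s₀ - R), R ≤ |s - s₀| := by
  rcases le_total (s₀ - R) u with h | h
  · exact .inl (max_eq_left h)
  · exact .inr fun s hs => le_abs.2 (.inr (by linarith [max_eq_right h]))

lemma min_eq_left_or_le_abs_sub (v s₀ R : ℝ) :
    min v (s₀ + R) = v ∨ ∀ s ≥ min v (s₀ + R), R ≤ |s - s₀| := by
  rcases le_total v (s₀ + R) with h | h
  · exact .inl (min_eq_left h)
  · exact .inr fun s hs => le_abs.2 (.inl (by linarith [min_eq_right h]))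

namespace IsGeodesicOn

variable {c : ℝ → X} {a b : ℝ}

lemma mono (hc : IsGeodesicOn c a b) {a' b' : ℝ} (ha : a ≤ a') (hb : b' ≤ b) :
    IsGeodesicOn c a' b' := fun s hs t ht =>
  hc s ⟨ha.trans hs.1, hs.2.trans hb⟩ t ⟨ha.trans ht.1, ht.2.trans hb⟩

lemma continuousOn (hc : IsGeodesicOn c a b) : ContinuousOn c (Icc a b) :=
  (LipschitzOnWith.of_dist_le_mul (K := 1) fun s hs t ht => by
    simp [hc s hs t ht, Real.dist_eq]).continuousOn

lemma isCompact_image (hc : IsGeodesicOn c a b) : IsCompact (c '' Icc a b) :=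
  isCompact_Icc.image_of_continuousOn hc.continuousOn

lemma sub_dist_le_infDist (hc : IsGeodesicOn c a b) {s₀ a' b' R : ℝ} (hs₀ : s₀ ∈ Icc a b)
    (ha' : a ≤ a') (hab' : a' ≤ b') (hb' : b' ≤ b) (hR : ∀ s ∈ Icc a' b', R ≤ |s - s₀|)
    (p : X) : R - dist p (c s₀) ≤ infDist p (c '' Icc a' b') :=
  _root_.sub_dist_le_infDist ((nonempty_Icc.2 hab').image c) <| by
    rintro _ ⟨s, hs, rfl⟩
    rw [hc s ⟨ha'.trans hs.1, hs.2.trans hb'⟩ s₀ hs₀]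
    exact hR s hs

end IsGeodesicOn

lemma succ_sq_le_four_mul_two_pow (n : ℕ) : (n + 1) ^ 2 ≤ 4 * 2 ^ n := by
  induction n with
  | zero => norm_num
  | succ n ih =>
    have := n.lt_two_pow_self
    rw [pow_succ 2 n]
    nlinarith

lemma succ_le_of_two_pow_le_mul_succ {A : ℝ} {n : ℕ} (h : (2 : ℝ) ^ n ≤ A * (n + 1)) :
    (n : ℝ) + 1 ≤ 4 * A := by
  have hsq : ((n : ℝ) + 1) ^ 2 ≤ 4 * 2 ^ n := by exact_mod_cast succ_sq_le_four_mul_two_pow n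
  have hpos : (0 : ℝ) < n + 1 := by positivity
  nlinarith

def PathsNearGeodesic (η : X → X → ℝ → X) (c : ℝ → X) (a b M : ℝ) : Prop :=
  ∀ u v, a ≤ u → u ≤ v → v ≤ b →
    ∀ q ∈ η (c u) (c v) '' Icc 0 1, infDist q (c '' Icc u v) ≤ M

lemma PathsNearGeodesic.mono {η : X → X → ℝ → X} {c : ℝ → X} {a b M M' : ℝ}
    (h : PathsNearGeodesic η c a b M) (hM : M ≤ M') : PathsNearGeodesic η c a b M' :=
  fun u v hau huv hvb q hq => (h u v hau huv hvb q hq).trans hM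

def ThinPathTriangles (η : X → X → ℝ → X) (D : ℝ) : Prop :=
  ∀ x y z, ∀ p ∈ η x y '' Icc (0 : ℝ) 1,
    infDist p (η x z '' Icc (0 : ℝ) 1 ∪ η z y '' Icc (0 : ℝ) 1) ≤ D

section PathSystem

variable {η : X → X → ℝ → X} {D : ℝ}

lemma exists_dist_le_of_mem_path (hcont : ∀ x y, ContinuousOn (η x y) (Icc 0 1))
    (hthin : ThinPathTriangles η D)
    {x y z q : X} (hq : q ∈ η x y '' Icc 0 1) :
    ∃ q' ∈ η x z '' Icc 0 1 ∪ η z y '' Icc 0 1, dist q q' ≤ D := by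
  have hne : (η x z '' Icc (0 : ℝ) 1 ∪ η z y '' Icc 0 1).Nonempty :=
    ((nonempty_Icc.2 zero_le_one).image _).inl
  obtain ⟨q', hq', hdist⟩ := ((isCompact_Icc.image_of_continuousOn (hcont x z)).union
    (isCompact_Icc.image_of_continuousOn (hcont z y))).exists_infDist_eq_dist hne q
  exact ⟨q', hq', hdist ▸ hthin x y z q hq⟩

lemma exists_dist_le_two_mul_of_mem_path (hD : 0 ≤ D)
    (hcont : ∀ x y, ContinuousOn (η x y) (Icc 0 1))
    (hthin : ThinPathTriangles η D)
    {x y z w q : X} (hq : q ∈ η x y '' Icc 0 1) :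
    ∃ q', (q' ∈ η x z '' Icc 0 1 ∨ q' ∈ η z w '' Icc 0 1 ∨ q' ∈ η w y '' Icc 0 1) ∧
      dist q q' ≤ 2 * D := by
  obtain ⟨q₁, hq₁ | hq₁, h₁⟩ := exists_dist_le_of_mem_path hcont hthin (z := z) hq
  · exact ⟨q₁, .inl hq₁, by linarith⟩
  obtain ⟨q₂, hq₂ | hq₂, h₂⟩ := exists_dist_le_of_mem_path hcont hthin (z := w) hq₁
  · exact ⟨q₂, .inr (.inl hq₂), by linarith [dist_triangle q q₁ q₂]⟩
  · exact ⟨q₂, .inr (.inr hq₂), by linarith [dist_triangle q q₁ q₂]⟩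

theorem infDist_le_of_sub_le_two_pow (hcont : ∀ x y, ContinuousOn (η x y) (Icc 0 1))
    (hstart : ∀ x y, η x y 0 = x)
    (hdiam : ∀ x y, dist x y ≤ 1 → diam (η x y '' Icc 0 1) ≤ D)
    (hthin : ThinPathTriangles η D) (n : ℕ) :
    ∀ {c : ℝ → X} {α β : ℝ}, α ≤ β → IsGeodesicOn c α β → β - α ≤ 2 ^ n →
      ∀ p ∈ η (c α) (c β) '' Icc 0 1, infDist p (c '' Icc α β) ≤ D * (n + 1) := by
  induction n with
  | zero =>
    intro c α β hαβ hc hlen p hp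
    have hshort : dist (c α) (c β) ≤ 1 := by
      rw [hc α ⟨le_rfl, hαβ⟩ β ⟨hαβ, le_rfl⟩, abs_sub_comm, abs_of_nonneg (sub_nonneg.2 hαβ)]
      simpa using hlen
    have hstart_mem : c α ∈ η (c α) (c β) '' Icc 0 1 :=
      ⟨0, left_mem_Icc.2 zero_le_one, hstart _ _⟩
    calc infDist p (c '' Icc α β) ≤ dist p (c α) :=
          infDist_le_dist_of_mem (mem_image_of_mem c (left_mem_Icc.2 hαβ))
      _ ≤ diam (η (c α) (c β) '' Icc 0 1) :=
          dist_le_diam_of_mem (isCompact_Icc.image_of_continuousOn (hcont _ _)).isBounded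
            hp hstart_mem
      _ ≤ D * ((0 : ℕ) + 1) := by simpa using hdiam _ _ hshort
  | succ n ih =>
    intro c α β hαβ hc hlen p hp
    have hαγ : α ≤ (α + β) / 2 := by linarith
    have hγβ : (α + β) / 2 ≤ β := by linarith
    rw [pow_succ] at hlen
    obtain ⟨q, hq | hq, hpq⟩ := exists_dist_le_of_mem_path hcont hthin (z := c ((α + β) / 2)) hp
    · calc infDist p (c '' Icc α β) ≤ infDist q (c '' Icc α ((α + β) / 2)) + dist p q :=
            infDist_le_infDist_of_subset_add_dist (image_mono (Icc_subset_Icc_right hγβ))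
              ((nonempty_Icc.2 hαγ).image c)
        _ ≤ D * (n + 1) + D :=
            add_le_add (ih hαγ (hc.mono le_rfl hγβ) (by linarith) q hq) hpq
        _ = D * ((n + 1 : ℕ) + 1) := by push_cast; ring
    · calc infDist p (c '' Icc α β) ≤ infDist q (c '' Icc ((α + β) / 2) β) + dist p q :=
            infDist_le_infDist_of_subset_add_dist (image_mono (Icc_subset_Icc_left hαγ))
              ((nonempty_Icc.2 hγβ).image c)
        _ ≤ D * (n + 1) + D :=
            add_le_add (ih hγβ (hc.mono hαγ le_rfl) (by linarith) q hq) hpq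
        _ = D * ((n + 1 : ℕ) + 1) := by push_cast; ring

theorem PathsNearGeodesic.improve (hD : 0 ≤ D)
    (hcont : ∀ x y, ContinuousOn (η x y) (Icc 0 1)) (hstart : ∀ x y, η x y 0 = x)
    (hdiam : ∀ x y, dist x y ≤ 1 → diam (η x y '' Icc 0 1) ≤ D)
    (hthin : ThinPathTriangles η D) {c : ℝ → X} {a b M : ℝ} (hc : IsGeodesicOn c a b)
    (hM : PathsNearGeodesic η c a b M) {n : ℕ} (hn : 4 * M + 4 * D + 2 ≤ 2 ^ n) :
    PathsNearGeodesic η c a b (D * n + 3 * D) := by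
  intro u v hau huv hvb q hq
  have hcuv := hc.mono hau hvb
  obtain ⟨_, ⟨s₀, hs₀, rfl⟩, hr⟩ :=
    hcuv.isCompact_image.exists_infDist_eq_dist ((nonempty_Icc.2 huv).image c) q
  set r := infDist q (c '' Icc u v)
  have hrM : r ≤ M := hM u v hau huv hvb q hq
  set R := 2 * M + 2 * D + 1
  have hR : 0 ≤ R := by linarith [infDist_nonneg (x := q) (s := c '' Icc u v)]
  have piece : ∀ a' b', u ≤ a' → a' ≤ b' → b' ≤ v →
      (b' - a' ≤ 2 ^ n ∨ ∀ s ∈ Icc a' b', R ≤ |s - s₀|) →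
      ∀ q' ∈ η (c a') (c b') '' Icc 0 1, dist q q' ≤ 2 * D → r ≤ D * n + 3 * D := by
    intro a' b' hua' hab' hb'v hshape q' hq' hqq'
    have hnear : r ≤ infDist q' (c '' Icc a' b') + dist q q' :=
      infDist_le_infDist_of_subset_add_dist (image_mono (Icc_subset_Icc hua' hb'v))
        ((nonempty_Icc.2 hab').image c)
    rcases hshape with hshort | hfar
    · linarith [infDist_le_of_sub_le_two_pow hcont hstart hdiam hthin n hab'
        (hcuv.mono hua' hb'v) hshort q' hq']
    · linarith [hcuv.sub_dist_le_infDist hs₀ hua' hab' hb'v hfar q,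
        hM a' b' (hau.trans hua') hab' (hb'v.trans hvb) q' hq',
        infDist_le_infDist_add_dist (x := q) (y := q') (s := c '' Icc a' b')]
  obtain ⟨q', hq' | hq' | hq', hqq'⟩ := exists_dist_le_two_mul_of_mem_path hD hcont hthin
    (z := c (max u (s₀ - R))) (w := c (min v (s₀ + R))) hq
  · refine piece u _ le_rfl (le_max_left _ _) (max_le huv (by linarith [hs₀.2]))
      ((max_eq_left_or_le_abs_sub u s₀ R).imp (fun h => ?_) fun h s hs => h s hs.2) q' hq' hqq'
    rw [h, sub_self]
    positivity
  · refine piece _ _ (le_max_left _ _) ?_ (min_le_left _ _) (.inl ?_) q' hq' hqq'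
    · exact max_le (le_min huv (by linarith [hs₀.1])) (le_min (by linarith [hs₀.2]) (by linarith))
    · linarith [min_le_right v (s₀ + R), le_max_right u (s₀ - R)]
  · refine piece _ v (le_min huv (by linarith [hs₀.1])) (min_le_left _ _) le_rfl
      ((min_eq_left_or_le_abs_sub v s₀ R).imp (fun h => ?_) fun h s hs => h s hs.1) q' hq' hqq'
    rw [h, sub_self]
    positivity

theorem pathsNearGeodesic_uniform (hD : 0 ≤ D)
    (hcont : ∀ x y, ContinuousOn (η x y) (Icc 0 1)) (hstart : ∀ x y, η x y 0 = x)
    (hdiam : ∀ x y, dist x y ≤ 1 → diam (η x y '' Icc 0 1) ≤ D)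
    (hthin : ThinPathTriangles η D) {c : ℝ → X} {a b : ℝ} (hab : a ≤ b)
    (hc : IsGeodesicOn c a b) :
    PathsNearGeodesic η c a b (128 * D ^ 2 + 18 * D) := by
  set T := {M | PathsNearGeodesic η c a b M}
  obtain ⟨N, hN⟩ := pow_unbounded_of_one_lt (b - a) one_lt_two
  have hT : T.Nonempty := ⟨D * (N + 1), fun u v hau huv hvb =>
    infDist_le_of_sub_le_two_pow hcont hstart hdiam hthin N huv (hc.mono hau hvb) (by linarith)⟩
  have hT_nonneg : ∀ M ∈ T, 0 ≤ M := fun M hM => infDist_nonneg.trans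
    (hM a a le_rfl le_rfl hab _ ⟨0, left_mem_Icc.2 zero_le_one, rfl⟩)
  have hbest : PathsNearGeodesic η c a b (sInf T) := fun u v hau huv hvb q hq =>
    le_csInf hT fun M hM => hM u v hau huv hvb q hq
  have hbest_nonneg := hT_nonneg _ hbest
  obtain ⟨k, hk, hk'⟩ :=
    exists_nat_pow_near (x := 4 * sInf T + 4 * D + 2) (by linarith) one_lt_two
  have hle : sInf T ≤ D * (k + 1 : ℕ) + 3 * D :=
    csInf_le ⟨0, hT_nonneg⟩ (hbest.improve hD hcont hstart hdiam hthin hc hk'.le)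
  have hk_le : ((k + 1 : ℕ) : ℝ) + 1 ≤ 4 * (32 * D + 4) := by
    refine succ_le_of_two_pow_le_mul_succ ?_
    push_cast at hle ⊢
    rw [pow_succ]
    nlinarith
  refine hbest.mono ?_
  push_cast at hle hk_le
  nlinarith

end PathSystem

theorem eta_close_to_geodesic.{u} :
    ∀ D : ℝ, 0 < D → ∃ κ₁ : ℝ, 0 < κ₁ ∧
      ∀ (X : Type u) [MetricSpace X], GeodesicSpace X →
      ∀ η : X → X → ℝ → X,
        (∀ x y : X, ContinuousOn (η x y) (Set.Icc 0 1)) →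
        (∀ x y : X, η x y 0 = x ∧ η x y 1 = y) →
        -- (1) short distance implies bounded diameter
        (∀ x y : X, dist x y ≤ 1 → Metric.diam (η x y '' Set.Icc 0 1) ≤ D) →
        -- (2) stability under restriction
        (∀ x y : X, ∀ s t : ℝ, 0 ≤ s → s ≤ t → t ≤ 1 →
          Metric.hausdorffDist (η x y '' Set.Icc s t)
            (η (η x y s) (η x y t) '' Set.Icc (0:ℝ) 1) ≤ D) →
        -- (3) thinness of η-triangles
        (∀ x y z : X, ∀ p ∈ η x y '' Set.Icc (0:ℝ) 1,
          Metric.infDist p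
            ((η x z '' Set.Icc (0:ℝ) 1) ∪ (η z y '' Set.Icc (0:ℝ) 1)) ≤ D) →
        ∀ x y : X, ∀ c : ℝ → X,
          c 0 = x → c (dist x y) = y → IsGeodesicOn c 0 (dist x y) →
          ∀ p ∈ η x y '' Set.Icc (0:ℝ) 1,
            Metric.infDist p (c '' Set.Icc 0 (dist x y)) ≤ κ₁ := by
  intro D hD
  refine ⟨128 * D ^ 2 + 18 * D, by positivity, ?_⟩
  intro X _ _ η hcont hends hdiam _ hthin x y c hc0 hcd hc p hp
  rw [← hc0, ← hcd] at hp
  exact pathsNearGeodesic_uniform hD.le hcont (fun x y => (hends x y).1) hdiam hthin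
    dist_nonneg hc 0 (dist x y) le_rfl dist_nonneg le_rfl p hp
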